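/- At every minimizer (p*, ε*) of Problem 3, at most one client has selection probability strictly between 0 and 1/N; that is, the set {k : 0 < p*ₖ < 1/N} has cardinality at most one. -/

import Mathlib

open Finset MeasureTheory Real

/-- Differential-privacy error term: sum over clients with nonzero selection
probability of `pₖ² / εₖ²`. -/
noncomputable def dpError {N : ℕ} (p ε : Fin N → ℝ) : ℝ :=
  ∑ k, if p k ≠ 0 then (p k) ^ 2 / (ε k) ^ 2 else 0

/-- Objective of Problem 3:
`G(p,ε) = η(‖p−pᵘ‖₁ + √(‖p−pᵘ‖₁² + Q·Σ_{pₖ≠0} pₖ²/εₖ²)) + Σₖ εₖ vₖ`,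
where `pᵘ = (1/N,…,1/N)`. -/
noncomputable def objG {N : ℕ} (η Q : ℝ) (v p ε : Fin N → ℝ) : ℝ :=
  η * ((∑ k, |p k - 1 / (N : ℝ)|) +
      Real.sqrt ((∑ k, |p k - 1 / (N : ℝ)|) ^ 2 + Q * dpError p ε)) +
    ∑ k, ε k * v k

/-- Feasible set of Problem 3: `Σₖ pₖ = 1`, `pₖ ≥ 0`, `εₖ ≥ 0`, and `εₖ > 0`
whenever `pₖ > 0`. -/
def Feasible {N : ℕ} (p ε : Fin N → ℝ) : Prop :=
  (∑ k, p k = 1) ∧ (∀ k, 0 ≤ p k) ∧ (∀ k, 0 ≤ ε k) ∧ (∀ k, 0 < p k → 0 < ε k)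

/-- `(p, ε)` is a minimizer of Problem 3 with virtual costs `v`. -/
def IsMinimizer {N : ℕ} (η Q : ℝ) (v p ε : Fin N → ℝ) : Prop :=
  Feasible p ε ∧ ∀ q e : Fin N → ℝ, Feasible q e → objG η Q v p ε ≤ objG η Q v q e

/-!
If two clients `i ≠ j` both had `0 < pₖ < 1/N`, move a mass `d` from `j` to `i` and rescale
their noise levels so that `εₖ` stays proportional to `pₖ^{2/3}`. The `ℓ₁` distance to `pᵘ`
does not change, while both `pₖ²/εₖ²` and `εₖvₖ` of client `i` (resp. `j`) get multiplied by
`(1 + d/pᵢ)^{2/3}` (resp. `(1 - d/pⱼ)^{2/3}`). These factors are strictly concave in `d`, and so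
is the objective along the perturbation, because `√` is concave and increasing. Hence
`G(d) + G(-d) < 2 G(0)` for small `d > 0`, contradicting minimality at `d = 0`.
-/

lemma one_sub_rpow_add_one_add_rpow_lt_two {x r : ℝ} (hx₀ : 0 < x) (hx₁ : x ≤ 1)
    (hr₀ : 0 < r) (hr₁ : r < 1) : (1 - x) ^ r + (1 + x) ^ r < 2 := by
  have h := (strictConcaveOn_rpow hr₀ hr₁).2 (Set.mem_Ici.2 (sub_nonneg.2 hx₁))
    (Set.mem_Ici.2 (by linarith : (0 : ℝ) ≤ 1 + x)) (by linarith) one_half_pos one_half_pos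
    (add_halves 1)
  simp only [smul_eq_mul] at h
  rw [show 1 / 2 * (1 - x) + 1 / 2 * (1 + x) = 1 by ring, one_rpow] at h
  linarith

lemma sqrt_add_sqrt_lt_two_mul_sqrt {a b c : ℝ} (ha : 0 ≤ a) (hb : 0 ≤ b) (h : a + b < 2 * c) :
    √a + √b < 2 * √c := by
  have hc : 0 ≤ c := by linarith
  refine lt_of_pow_lt_pow_left₀ 2 (by positivity) ?_
  nlinarith [sq_sqrt ha, sq_sqrt hb, sq_sqrt hc, sq_nonneg (√a - √b)]

lemma mul_sq_div_rpow_mul_sq {l x y : ℝ} (hl : 0 < l) :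
    (l * x) ^ 2 / (l ^ (2 / 3 : ℝ) * y) ^ 2 = l ^ (2 / 3 : ℝ) * (x ^ 2 / y ^ 2) := by
  have hl2 : l ^ 2 = (l ^ (2 / 3 : ℝ)) ^ 2 * l ^ (2 / 3 : ℝ) := by
    rw [← rpow_natCast, ← rpow_natCast, ← rpow_mul hl.le, ← rpow_add hl]
    norm_num
  have hpos : 0 < l ^ (2 / 3 : ℝ) := rpow_pos_of_pos hl _
  rw [mul_pow, mul_pow, hl2]
  field_simp

lemma sum_eq_sum_add_of_eq_off_pair {ι M : Type*} [Fintype ι] [DecidableEq ι] [AddCommGroup M]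
    {f g : ι → M} {i j : ι} (hij : i ≠ j) (h : ∀ k, k ≠ i → k ≠ j → f k = g k) :
    ∑ k, f k = ∑ k, g k + (f i - g i) + (f j - g j) := by
  have hrest : ∑ k ∈ {i, j}ᶜ, f k = ∑ k ∈ {i, j}ᶜ, g k :=
    sum_congr rfl fun k hk => by
      simp only [mem_compl, mem_insert, mem_singleton, not_or] at hk
      exact h k hk.1 hk.2
  rw [← sum_compl_add_sum {i, j} f, ← sum_compl_add_sum {i, j} g, sum_pair hij, sum_pair hij,
    hrest]
  abel

section Transfer

variable {N : ℕ} (p ε : Fin N → ℝ) (i j : Fin N) (d : ℝ)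

def transfer : Fin N → ℝ :=
  Function.update (Function.update p i (p i + d)) j (p j - d)

/-- `2/3` is the exponent for which `pₖ²/εₖ²` and `εₖvₖ` scale by the same factor. -/
noncomputable def transferNoise : Fin N → ℝ :=
  Function.update (Function.update ε i ((1 + d / p i) ^ (2 / 3 : ℝ) * ε i)) j
    ((1 - d / p j) ^ (2 / 3 : ℝ) * ε j)

variable {p ε i j d}

lemma transfer_apply_left (hij : i ≠ j) : transfer p i j d i = p i + d := by
  simp [transfer, hij]

lemma transfer_apply_right : transfer p i j d j = p j - d := by
  simp [transfer]

lemma transfer_apply_of_ne {k : Fin N} (hki : k ≠ i) (hkj : k ≠ j) :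
    transfer p i j d k = p k := by
  simp [transfer, hki, hkj]

lemma transferNoise_apply_left (hij : i ≠ j) :
    transferNoise p ε i j d i = (1 + d / p i) ^ (2 / 3 : ℝ) * ε i := by
  simp [transferNoise, hij]

lemma transferNoise_apply_right :
    transferNoise p ε i j d j = (1 - d / p j) ^ (2 / 3 : ℝ) * ε j := by
  simp [transferNoise]

lemma transferNoise_apply_of_ne {k : Fin N} (hki : k ≠ i) (hkj : k ≠ j) :
    transferNoise p ε i j d k = ε k := by
  simp [transferNoise, hki, hkj]

lemma sum_transfer (hij : i ≠ j) : ∑ k, transfer p i j d k = ∑ k, p k := by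
  rw [sum_eq_sum_add_of_eq_off_pair hij fun k => transfer_apply_of_ne (d := d),
    transfer_apply_left hij, transfer_apply_right]
  ring

lemma Feasible.transfer (h : Feasible p ε) (hij : i ≠ j) (hi : 0 < p i) (hj : 0 < p j)
    (hdi : -p i < d) (hdj : d < p j) :
    Feasible (transfer p i j d) (transferNoise p ε i j d) := by
  obtain ⟨hsum, hp, hε, hpε⟩ := h
  have hli : 0 < 1 + d / p i := by
    have : -1 < d / p i := by rw [lt_div_iff₀ hi]; linarith
    linarith
  have hlj : 0 < 1 - d / p j := by rw [sub_pos, div_lt_one hj]; exact hdj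
  refine ⟨(sum_transfer hij).trans hsum, fun k => ?_, fun k => ?_, fun k => ?_⟩
  · by_cases hki : k = i
    · subst hki; rw [transfer_apply_left hij]; linarith
    by_cases hkj : k = j
    · subst hkj; rw [transfer_apply_right]; linarith
    rw [transfer_apply_of_ne hki hkj]; exact hp k
  · by_cases hki : k = i
    · subst hki; rw [transferNoise_apply_left hij]; exact mul_nonneg (by positivity) (hε _)
    by_cases hkj : k = j
    · subst hkj; rw [transferNoise_apply_right]; exact mul_nonneg (by positivity) (hε _)
    rw [transferNoise_apply_of_ne hki hkj]; exact hε k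
  · by_cases hki : k = i
    · subst hki; rw [transferNoise_apply_left hij]
      exact fun _ => mul_pos (rpow_pos_of_pos hli _) (hpε _ hi)
    by_cases hkj : k = j
    · subst hkj; rw [transferNoise_apply_right]
      exact fun _ => mul_pos (rpow_pos_of_pos hlj _) (hpε _ hj)
    rw [transfer_apply_of_ne hki hkj, transferNoise_apply_of_ne hki hkj]; exact hpε k

lemma sum_abs_transfer_sub {c : ℝ} (hij : i ≠ j) (hi : p i ≤ c) (hi' : p i + d ≤ c)
    (hj : p j ≤ c) (hj' : p j - d ≤ c) :
    ∑ k, |transfer p i j d k - c| = ∑ k, |p k - c| := by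
  rw [sum_eq_sum_add_of_eq_off_pair hij fun k hki hkj => by rw [transfer_apply_of_ne hki hkj],
    transfer_apply_left hij, transfer_apply_right, abs_of_nonpos (sub_nonpos.2 hi),
    abs_of_nonpos (sub_nonpos.2 hi'), abs_of_nonpos (sub_nonpos.2 hj),
    abs_of_nonpos (sub_nonpos.2 hj')]
  ring

lemma dpError_transfer (hij : i ≠ j) (hi : 0 < p i) (hj : 0 < p j) (hdi : -p i < d)
    (hdj : d < p j) :
    dpError (transfer p i j d) (transferNoise p ε i j d) = dpError p ε +
      ((1 + d / p i) ^ (2 / 3 : ℝ) - 1) * (p i ^ 2 / ε i ^ 2) +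
      ((1 - d / p j) ^ (2 / 3 : ℝ) - 1) * (p j ^ 2 / ε j ^ 2) := by
  have hli : p i + d = (1 + d / p i) * p i := by field_simp
  have hlj : p j - d = (1 - d / p j) * p j := by field_simp
  have hqi : p i + d ≠ 0 := by linarith
  have hqj : p j - d ≠ 0 := by linarith
  unfold dpError
  rw [sum_eq_sum_add_of_eq_off_pair hij fun k hki hkj => by
      rw [transfer_apply_of_ne hki hkj, transferNoise_apply_of_ne hki hkj],
    transfer_apply_left hij, transfer_apply_right, transferNoise_apply_left hij,
    transferNoise_apply_right, if_pos hqi, if_pos hqj, if_pos hi.ne', if_pos hj.ne', hli, hlj,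
    mul_sq_div_rpow_mul_sq (by nlinarith), mul_sq_div_rpow_mul_sq (by nlinarith)]
  ring

lemma sum_transferNoise_mul (hij : i ≠ j) (v : Fin N → ℝ) :
    ∑ k, transferNoise p ε i j d k * v k = ∑ k, ε k * v k +
      ((1 + d / p i) ^ (2 / 3 : ℝ) - 1) * (ε i * v i) +
      ((1 - d / p j) ^ (2 / 3 : ℝ) - 1) * (ε j * v j) := by
  rw [sum_eq_sum_add_of_eq_off_pair hij fun k hki hkj => by
      rw [transferNoise_apply_of_ne hki hkj],
    transferNoise_apply_left hij, transferNoise_apply_right]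
  ring

end Transfer

lemma objG_transfer_add_objG_transfer_neg_lt {N : ℕ} {η Q : ℝ} {v p ε : Fin N → ℝ}
    {i j : Fin N} {δ : ℝ} (h : Feasible p ε) (hη : 0 < η) (hQ : 0 < Q) (hv : ∀ k, 0 ≤ v k)
    (hij : i ≠ j) (hδ : 0 < δ) (hδi : δ < p i) (hδj : δ < p j) (hi : p i + δ ≤ 1 / N)
    (hj : p j + δ ≤ 1 / N) :
    objG η Q v (transfer p i j δ) (transferNoise p ε i j δ) +
      objG η Q v (transfer p i j (-δ)) (transferNoise p ε i j (-δ)) < 2 * objG η Q v p ε := by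
  have hpi : 0 < p i := hδ.trans hδi
  have hpj : 0 < p j := hδ.trans hδj
  have hεi : 0 < ε i := h.2.2.2 i hpi
  have hu := one_sub_rpow_add_one_add_rpow_lt_two (r := 2 / 3) (div_pos hδ hpi)
    ((div_le_one hpi).2 hδi.le) (by norm_num) (by norm_num)
  have hw := one_sub_rpow_add_one_add_rpow_lt_two (r := 2 / 3) (div_pos hδ hpj)
    ((div_le_one hpj).2 hδj.le) (by norm_num) (by norm_num)
  have hdp : ∀ d, -p i < d → d < p j → 0 ≤ dpError p ε +
      ((1 + d / p i) ^ (2 / 3 : ℝ) - 1) * (p i ^ 2 / ε i ^ 2) +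
      ((1 - d / p j) ^ (2 / 3 : ℝ) - 1) * (p j ^ 2 / ε j ^ 2) := fun d hdi hdj => by
    rw [← dpError_transfer hij hpi hpj hdi hdj]
    exact sum_nonneg fun k _ => by split_ifs <;> positivity
  have hdp_pos := hdp δ (by linarith) hδj
  have hdp_neg := hdp (-δ) (by linarith) (by linarith)
  clear hdp
  have ha : 0 < p i ^ 2 / ε i ^ 2 := by positivity
  have hb : 0 ≤ p j ^ 2 / ε j ^ 2 := by positivity
  have hci : 0 ≤ ε i * v i := mul_nonneg (h.2.2.1 i) (hv i)
  have hcj : 0 ≤ ε j * v j := mul_nonneg (h.2.2.1 j) (hv j)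
  unfold objG
  rw [sum_abs_transfer_sub hij (by linarith) hi (by linarith) (by linarith),
    sum_abs_transfer_sub hij (by linarith) (by linarith) (by linarith) (by linarith),
    dpError_transfer hij hpi hpj (by linarith) hδj, dpError_transfer hij hpi hpj (by linarith)
      (by linarith), sum_transferNoise_mul hij, sum_transferNoise_mul hij]
  simp only [neg_div, sub_neg_eq_add, ← sub_eq_add_neg] at hdp_neg ⊢
  generalize (1 + δ / p i) ^ (2 / 3 : ℝ) = ui at *
  generalize (1 - δ / p i) ^ (2 / 3 : ℝ) = ui' at *
  generalize (1 + δ / p j) ^ (2 / 3 : ℝ) = uj' at *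
  generalize (1 - δ / p j) ^ (2 / 3 : ℝ) = uj at *
  set S := ∑ k, |p k - 1 / (N : ℝ)|
  have hsqrt := sqrt_add_sqrt_lt_two_mul_sqrt (add_nonneg (sq_nonneg S) (mul_nonneg hQ.le hdp_pos))
    (add_nonneg (sq_nonneg S) (mul_nonneg hQ.le hdp_neg)) (c := S ^ 2 + Q * dpError p ε)
    (by nlinarith [mul_neg_of_neg_of_pos (by linarith : ui + ui' - 2 < 0) ha,
      mul_nonpos_of_nonpos_of_nonneg (by linarith : uj + uj' - 2 ≤ 0) hb])
  nlinarith [mul_lt_mul_of_pos_left hsqrt hη,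
    mul_nonpos_of_nonpos_of_nonneg (by linarith : ui + ui' - 2 ≤ 0) hci,
    mul_nonpos_of_nonpos_of_nonneg (by linarith : uj + uj' - 2 ≤ 0) hcj]

theorem at_most_one_under_selected_general
    {N : ℕ} (v : Fin N → ℝ)
    (hv_pos : ∀ k, 0 < v k)
    (η Q : ℝ) (hη : 0 < η) (hQ : 0 < Q)
    (p ε : Fin N → ℝ) (hmin : IsMinimizer η Q v p ε) :
    {k : Fin N | 0 < p k ∧ p k < 1 / (N : ℝ)}.Subsingleton := by
  rintro i ⟨hpi, hpiN⟩ j ⟨hpj, hpjN⟩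
  by_contra hij
  obtain ⟨hfeas, hmin⟩ := hmin
  obtain ⟨δ, hδ, hδm⟩ :=
    exists_between (lt_min (lt_min hpi hpj) (lt_min (sub_pos.2 hpiN) (sub_pos.2 hpjN)))
  simp only [lt_min_iff] at hδm
  obtain ⟨⟨hδi, hδj⟩, hδi', hδj'⟩ := hδm
  have hlt := objG_transfer_add_objG_transfer_neg_lt hfeas hη hQ (fun k => (hv_pos k).le) hij hδ
    hδi hδj (by linarith) (by linarith)
  have hle₁ := hmin _ _ (hfeas.transfer hij hpi hpj (by linarith) hδj)
  have hle₂ := hmin _ _ (hfeas.transfer hij hpi hpj (by linarith) (by linarith) (d := -δ))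
  linarith

/-- At every minimizer of Problem 3 (pairwise distinct positive
virtual costs), at most one client has selection probability strictly between
`0` and `1/N`. -/
theorem at_most_one_under_selected
    {N : ℕ} (hN : 2 ≤ N) (v : Fin N → ℝ)
    (hv_pos : ∀ k, 0 < v k) (hv_inj : Function.Injective v)
    (η Q : ℝ) (hη : 0 < η) (hQ : 0 < Q)
    (p ε : Fin N → ℝ) (hmin : IsMinimizer η Q v p ε) :
    {k : Fin N | 0 < p k ∧ p k < 1 / (N : ℝ)}.Subsingleton :=
  at_most_one_under_selected_general v hv_pos η Q hη hQ p ε hmin
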